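/- If every vertex of the graph G has odd degree, then exp(-i(π/2)H_C) = (-i)^{|E|} · σ^z_1 σ^z_2 ⋯ σ^z_n, where |E| is the number of edges of G; that is, the half-period evolution under the MaxCut Hamiltonian equals, up to the global phase (-i)^{|E|}, the product of Pauli-Z operators over all qubits. -/

import Mathlib

open Matrix Complex

noncomputable section

/-- Computational basis index set for `n` qubits, identified with `Fin 2 ^ n` via binary digits. -/
abbrev QIdx (n : ℕ) := Fin n → Fin 2

/-- The Pauli X matrix. -/
def pauliX : Matrix (Fin 2) (Fin 2) ℂ := !![0, 1; 1, 0]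

/-- The Pauli Z matrix. -/
def pauliZ : Matrix (Fin 2) (Fin 2) ℂ := !![1, 0; 0, -1]

/-- The `n`-fold Kronecker product with `M` in the `i`-th tensor factor and the 2×2 identity in
every other factor, realized as a matrix on `ℂ^(2^n)` with indices `Fin n → Fin 2`. -/
def pauliAt {n : ℕ} (M : Matrix (Fin 2) (Fin 2) ℂ) (i : Fin n) :
    Matrix (QIdx n) (QIdx n) ℂ :=
  Matrix.of fun s t => ∏ j, if j = i then M (s j) (t j) else if s j = t j then 1 else 0

/-- `σ^x_i`. -/
def sigmaX {n : ℕ} (i : Fin n) : Matrix (QIdx n) (QIdx n) ℂ := pauliAt pauliX i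

/-- `σ^z_i`. -/
def sigmaZ {n : ℕ} (i : Fin n) : Matrix (QIdx n) (QIdx n) ℂ := pauliAt pauliZ i

lemma sigmaZ_eq_diagonal {n : ℕ} (i : Fin n) :
    sigmaZ i = Matrix.diagonal (fun s => pauliZ (s i) (s i)) := by
  ext s t
  simp only [sigmaZ, pauliAt, Matrix.of_apply, Matrix.diagonal_apply]
  by_cases h : s = t
  · subst h
    simp [Finset.prod_ite_eq']
  · rw [if_neg h]
    obtain ⟨j₀, hj₀⟩ := Function.ne_iff.mp h
    refine Finset.prod_eq_zero (Finset.mem_univ j₀) ?_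
    by_cases hji : j₀ = i
    · subst hji
      rw [if_pos rfl]
      have hz : ∀ a b : Fin 2, a ≠ b → pauliZ a b = 0 := by
        intro a b hab
        fin_cases a <;> fin_cases b <;> simp_all [pauliZ]
      exact hz _ _ hj₀
    · rw [if_neg hji, if_neg hj₀]

lemma sigmaZ_mul_comm {n : ℕ} (i j : Fin n) : sigmaZ i * sigmaZ j = sigmaZ j * sigmaZ i := by
  rw [sigmaZ_eq_diagonal, sigmaZ_eq_diagonal, Matrix.diagonal_mul_diagonal,
    Matrix.diagonal_mul_diagonal]
  ext s
  simp [mul_comm]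

/-- The MaxCut Hamiltonian `H_C = Σ_{{i,j} ∈ E} σ^z_i σ^z_j`. -/
def hamC (n : ℕ) (G : SimpleGraph (Fin n)) [DecidableRel G.Adj] :
    Matrix (QIdx n) (QIdx n) ℂ :=
  ∑ e ∈ G.edgeFinset,
    Sym2.lift ⟨fun i j => sigmaZ i * sigmaZ j, fun i j => sigmaZ_mul_comm i j⟩ e

/-- The mixing Hamiltonian `H_B = -Σ_i σ^x_i`. -/
def hamB (n : ℕ) : Matrix (QIdx n) (QIdx n) ℂ := -(∑ i : Fin n, sigmaX i)

/-- `U_B(β) = exp(-i β H_B)`. -/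
def uB (n : ℕ) (β : ℝ) : Matrix (QIdx n) (QIdx n) ℂ :=
  NormedSpace.exp ((-(Complex.I) * (β : ℂ)) • hamB n)

/-- `U_C(γ) = exp(-i γ H_C)`. -/
def uC (n : ℕ) (G : SimpleGraph (Fin n)) [DecidableRel G.Adj] (γ : ℝ) :
    Matrix (QIdx n) (QIdx n) ℂ :=
  NormedSpace.exp ((-(Complex.I) * (γ : ℂ)) • hamC n G)

/-- The plus state `|+⟩ = 2^{-n/2} (1,…,1)ᵀ`. -/
def plusState (n : ℕ) : QIdx n → ℂ := fun _ => ((Real.sqrt 2 : ℂ))⁻¹ ^ n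

/-- The `m`-th layer `U_B(β_{m+1}) U_C(γ_{m+1})` of the QAOA circuit (`m` is 0-indexed);
`1` if `m` is out of range. -/
def qaoaLayer (n : ℕ) (G : SimpleGraph (Fin n)) [DecidableRel G.Adj] {p : ℕ}
    (β γ : Fin p → ℝ) (m : ℕ) : Matrix (QIdx n) (QIdx n) ℂ :=
  if h : m < p then uB n (β ⟨m, h⟩) * uC n G (γ ⟨m, h⟩) else 1

/-- The ordered product of the (0-indexed) layers `a, a+1, …, a+len-1` of the QAOA circuit, with
higher layers acting later (to the left). -/
def uProd (n : ℕ) (G : SimpleGraph (Fin n)) [DecidableRel G.Adj] {p : ℕ}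
    (β γ : Fin p → ℝ) (a len : ℕ) : Matrix (QIdx n) (QIdx n) ℂ :=
  (((List.range' a len).reverse).map (qaoaLayer n G β γ)).prod

/-- The depth-`p` QAOA state `|β,γ⟩ = U_B(β_p) U_C(γ_p) ⋯ U_B(β_1) U_C(γ_1) |+⟩`. -/
def qaoaState (n : ℕ) (G : SimpleGraph (Fin n)) [DecidableRel G.Adj] {p : ℕ}
    (β γ : Fin p → ℝ) : QIdx n → ℂ :=
  (uProd n G β γ 0 p).mulVec (plusState n)

/-- The depth-`p` QAOA cost function `E_p(β,γ) = ⟨β,γ| H_C |β,γ⟩` as a real-valued function on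
`ℝ^p × ℝ^p`. -/
def energyE (n : ℕ) (G : SimpleGraph (Fin n)) [DecidableRel G.Adj] (p : ℕ)
    (x : (Fin p → ℝ) × (Fin p → ℝ)) : ℝ :=
  (star (qaoaState n G x.1 x.2) ⬝ᵥ (hamC n G).mulVec (qaoaState n G x.1 x.2)).re

/-- The point `Γ^{p+1}(i,j)` obtained from `(β⋆,γ⋆) ∈ ℝ^p × ℝ^p` by inserting a `0` at
position `i` in the `β`-part and at position `j` in the `γ`-part. -/
def padded {p : ℕ} (x : (Fin p → ℝ) × (Fin p → ℝ)) (i j : Fin (p + 1)) :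
    (Fin (p + 1) → ℝ) × (Fin (p + 1) → ℝ) :=
  (i.insertNth 0 x.1, j.insertNth 0 x.2)

/-- The coordinate direction in `ℝ^p × ℝ^p` corresponding to `β_l` (`Sum.inl l`) or
`γ_l` (`Sum.inr l`). -/
def coordDir {p : ℕ} : Fin p ⊕ Fin p → (Fin p → ℝ) × (Fin p → ℝ) :=
  Sum.elim (fun l => (Pi.single l 1, 0)) (fun l => (0, Pi.single l 1))

/-- Partial derivative of a real function on `ℝ^p × ℝ^p` in the coordinate direction `a`. -/
def pderiv' {p : ℕ} (f : ((Fin p → ℝ) × (Fin p → ℝ)) → ℝ)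
    (a : Fin p ⊕ Fin p) (x : (Fin p → ℝ) × (Fin p → ℝ)) : ℝ :=
  fderiv ℝ f x (coordDir a)

/-- The Hessian matrix of a real function on `ℝ^p × ℝ^p`, with rows and columns indexed by the
coordinates `β_1,…,β_p` (`Sum.inl`) and `γ_1,…,γ_p` (`Sum.inr`). -/
def hessian {p : ℕ} (f : ((Fin p → ℝ) × (Fin p → ℝ)) → ℝ)
    (x : (Fin p → ℝ) × (Fin p → ℝ)) : Matrix (Fin p ⊕ Fin p) (Fin p ⊕ Fin p) ℝ :=
  Matrix.of fun a b => pderiv' (pderiv' f b) a x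

/-- The commutator `[A, B] = AB - BA`. -/
def commMat {n : ℕ} (A B : Matrix (QIdx n) (QIdx n) ℂ) : Matrix (QIdx n) (QIdx n) ℂ :=
  A * B - B * A

end

/-!
Every `σ^z_i` is diagonal in the computational basis, hence so is `H_C`, and on a basis state `s`
with spins `z_v = ±1` the phase is `exp(-i(π/2) Σ_{uv ∈ E} z_u z_v) = ∏_{uv ∈ E} (-i z_u z_v)`,
because `exp(∓iπ/2) = ∓i`. Collecting the spins vertex by vertex turns `∏_{uv ∈ E} z_u z_v` into
`∏_v z_v ^ deg v`, which is `∏_v z_v` when all degrees are odd.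
-/

theorem Sym2.lift_mul_eq_prod_ite {V M : Type*} [Fintype V] [DecidableEq V] [CommMonoid M]
    (f : V → M) {e : Sym2 V} (he : ¬e.IsDiag) :
    Sym2.lift ⟨fun i j => f i * f j, fun _ _ => mul_comm _ _⟩ e =
      ∏ v, if v ∈ e then f v else 1 := by
  induction e using Sym2.ind with
  | _ i j =>
    have hij : i ≠ j := by simpa using he
    have hmem : Finset.univ.filter (· ∈ s(i, j)) = {i, j} := by
      ext v
      simp [Sym2.mem_iff]
    rw [Sym2.lift_mk, ← Finset.prod_filter, hmem, Finset.prod_pair hij]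

theorem Complex.exp_neg_I_mul_pi_div_two_mul {z : ℂ} (hz : z = 1 ∨ z = -1) :
    cexp (-I * ((Real.pi / 2 : ℝ) : ℂ) * z) = -I * z := by
  rcases hz with rfl | rfl
  · rw [show -I * ((Real.pi / 2 : ℝ) : ℂ) * 1 = -Real.pi / 2 * I by push_cast; ring,
      exp_neg_pi_div_two_mul_I, mul_one]
  · rw [show -I * ((Real.pi / 2 : ℝ) : ℂ) * -1 = Real.pi / 2 * I by push_cast; ring,
      exp_pi_div_two_mul_I, neg_mul_neg, mul_one]

theorem Matrix.list_prod_map_diagonal {ι m R : Type*} [Fintype m] [DecidableEq m] [CommSemiring R]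
    (l : List ι) (d : ι → m → R) :
    (l.map fun i => diagonal (d i)).prod = diagonal fun s => (l.map fun i => d i s).prod := by
  induction l with
  | nil => simp
  | cons a l ih => simp [ih]

namespace SimpleGraph

variable {V : Type*} [Fintype V] [DecidableEq V] (G : SimpleGraph V) [DecidableRel G.Adj]

theorem prod_edgeFinset_lift_mul {M : Type*} [CommMonoid M] (f : V → M) :
    ∏ e ∈ G.edgeFinset, Sym2.lift ⟨fun i j => f i * f j, fun _ _ => mul_comm _ _⟩ e =
      ∏ v, f v ^ G.degree v := calc
  _ = ∏ e ∈ G.edgeFinset, ∏ v, if v ∈ e then f v else 1 :=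
      Finset.prod_congr rfl fun e he =>
        Sym2.lift_mul_eq_prod_ite f (G.not_isDiag_of_mem_edgeSet (mem_edgeFinset.mp he))
  _ = ∏ v, ∏ e ∈ G.edgeFinset, if v ∈ e then f v else 1 := Finset.prod_comm
  _ = ∏ v, f v ^ G.degree v := by
      refine Finset.prod_congr rfl fun v _ => ?_
      rw [← Finset.prod_filter, ← incidenceFinset_eq_filter, Finset.prod_const,
        card_incidenceFinset_eq_degree]

theorem cexp_neg_I_mul_pi_div_two_mul_sum_edgeFinset (f : V → ℂ)
    (hf : ∀ v, f v = 1 ∨ f v = -1) (hodd : ∀ v, Odd (G.degree v)) :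
    cexp (-I * ((Real.pi / 2 : ℝ) : ℂ) *
        ∑ e ∈ G.edgeFinset, Sym2.lift ⟨fun i j => f i * f j, fun _ _ => mul_comm _ _⟩ e) =
      (-I) ^ G.edgeFinset.card * ∏ v, f v := by
  have hedge : ∀ e : Sym2 V,
      Sym2.lift ⟨fun i j => f i * f j, fun _ _ => mul_comm _ _⟩ e = 1 ∨
        Sym2.lift ⟨fun i j => f i * f j, fun _ _ => mul_comm _ _⟩ e = -1 := by
    refine Sym2.ind fun i j => ?_
    rcases hf i with hi | hi <;> rcases hf j with hj | hj <;> simp [hi, hj]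
  have hspin : ∀ v, f v ^ G.degree v = f v := fun v => by
    rcases hf v with h | h <;> simp [h, (hodd v).neg_one_pow]
  rw [Finset.mul_sum, exp_sum,
    Finset.prod_congr rfl fun e _ => Complex.exp_neg_I_mul_pi_div_two_mul (hedge e),
    Finset.prod_mul_distrib, Finset.prod_const, prod_edgeFinset_lift_mul]
  simp only [hspin]

end SimpleGraph

theorem pauliZ_apply_self_eq_one_or_neg_one (a : Fin 2) : pauliZ a a = 1 ∨ pauliZ a a = -1 := by
  fin_cases a <;> simp [pauliZ]

theorem list_prod_sigmaZ (n : ℕ) :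
    ((List.finRange n).map sigmaZ).prod = diagonal fun s => ∏ i, pauliZ (s i) (s i) := by
  simp only [funext sigmaZ_eq_diagonal, Matrix.list_prod_map_diagonal, Fin.prod_univ_def]

theorem hamC_eq_diagonal (n : ℕ) (G : SimpleGraph (Fin n)) [DecidableRel G.Adj] :
    hamC n G = diagonal fun s => ∑ e ∈ G.edgeFinset,
      Sym2.lift ⟨fun i j => pauliZ (s i) (s i) * pauliZ (s j) (s j), fun _ _ => mul_comm _ _⟩ e := by
  have hedge : ∀ e : Sym2 (Fin n),
      Sym2.lift ⟨fun i j => sigmaZ i * sigmaZ j, fun i j => sigmaZ_mul_comm i j⟩ e =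
        diagonalAddMonoidHom (QIdx n) ℂ fun s =>
          Sym2.lift ⟨fun i j => pauliZ (s i) (s i) * pauliZ (s j) (s j), fun _ _ => mul_comm _ _⟩ e :=
    Sym2.ind fun i j => by
      simp only [Sym2.lift_mk, sigmaZ_eq_diagonal, diagonal_mul_diagonal, diagonalAddMonoidHom_apply]
  rw [hamC, Finset.sum_congr rfl fun e _ => hedge e, ← map_sum]
  simp [Finset.sum_fn]

theorem stmt17_general (n : ℕ) (G : SimpleGraph (Fin n)) [DecidableRel G.Adj]
    (hodd : ∀ v : Fin n, Odd (G.degree v)) :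
    uC n G (Real.pi / 2) =
      (-Complex.I) ^ G.edgeFinset.card •
        ((List.finRange n).map (fun i => sigmaZ i)).prod := by
  rw [uC, hamC_eq_diagonal, list_prod_sigmaZ, ← diagonal_smul, exp_diagonal, ← diagonal_smul]
  congr 1
  funext s
  rw [Pi.exp_def, ← Complex.exp_eq_exp_ℂ]
  exact G.cexp_neg_I_mul_pi_div_two_mul_sum_edgeFinset _
    (fun i => pauliZ_apply_self_eq_one_or_neg_one (s i)) hodd

/-- for odd-degree graphs, `exp(-i(π/2)H_C) = (-i)^|E| · σ^z_1 ⋯ σ^z_n`. -/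
theorem stmt17 (n : ℕ) (hn : 1 ≤ n) (G : SimpleGraph (Fin n)) [DecidableRel G.Adj]
    (hodd : ∀ v : Fin n, Odd (G.degree v)) :
    uC n G (Real.pi / 2) =
      (-Complex.I) ^ G.edgeFinset.card •
        ((List.finRange n).map (fun i => sigmaZ i)).prod :=
  stmt17_general n G hodd
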